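/- If the hyper-parameters Δ₁, Δ₂, ϑ₁, ϑ₂, ζ₁, ζ₂ in the kernelized formulation are all set to zero, and both kernels are the Kronecker delta kernel on finite sets {x₁,…,x_m} and {y₁,…,y_n} with distinct points (so G₁ = I_m, G₂ = I_n), then the formulation reduces exactly to the discrete optimal transport linear program: minimize tr(αCᵀ) over α ∈ ℝ^{m×n} with α ≥ 0, α𝟏 = (1/m)𝟏, αᵀ𝟏 = (1/n)𝟏. -/

import Mathlib

/-!
With identity Gram matrices every constraint of the kernelized formulation is a squared
Euclidean norm bounded by zero, i.e. an equation. The two marginal constraints are then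
literally `α𝟏 = (1/m)𝟏` and `αᵀ𝟏 = (1/n)𝟏`. Conversely, given these marginals, the witnesses
`β = m αᵀ` and `γ = n α` make the vectors inside the MMD norms and the matrices inside the
coupling traces vanish, and the total mass is `m · (1/m) = 1`.
-/

open Matrix

section

variable {ι κ R : Type*}

theorem dotProduct_self_nonpos_iff [Fintype κ] [Ring R] [LinearOrder R] [IsStrictOrderedRing R]
    {v : κ → R} : v ⬝ᵥ v ≤ 0 ↔ v = 0 := by
  rw [← dotProduct_self_eq_zero, le_antisymm_iff, iff_self_and]
  exact fun _ => Finset.sum_nonneg fun i _ => mul_self_nonneg (v i)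

theorem mulVec_const_one_eq_smul_iff [Fintype κ] [NonAssocSemiring R] (α : Matrix ι κ R) (c : R) :
    α *ᵥ (fun _ => 1) = c • (fun _ => 1) ↔ ∀ i, ∑ j, α i j = c := by
  simp [funext_iff, mulVec, dotProduct]

theorem sum_sum_eq_one_of_sum_eq_one_div_card [DivisionSemiring R] [CharZero R] [Fintype ι]
    [Fintype κ] [Nonempty ι] (α : Matrix ι κ R)
    (hrow : ∀ i, ∑ j, α i j = 1 / (Fintype.card ι : R)) :
    ∑ i, ∑ j, α i j = 1 := by
  simp [hrow]

theorem mmd_expr_eq_dotProduct_self [Fintype ι] [Fintype κ] [Field R] (β : Matrix κ ι R)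
    (u : ι → R) (w : κ → R) (a b : R) :
    1 / a ^ 2 * (u ⬝ᵥ ((βᵀ * β) *ᵥ u)) - 2 / (a * b) * (w ⬝ᵥ (β *ᵥ u)) +
        1 / b ^ 2 * (w ⬝ᵥ w) =
      (a⁻¹ • (β *ᵥ u) - b⁻¹ • w) ⬝ᵥ (a⁻¹ • (β *ᵥ u) - b⁻¹ • w) := by
  simp only [← mulVec_mulVec, dotProduct_mulVec u βᵀ, vecMul_transpose, sub_dotProduct,
    dotProduct_sub, smul_dotProduct, dotProduct_smul, smul_eq_mul, dotProduct_comm w]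
  ring

theorem mmd_expr_nonpos_iff [Fintype ι] [Fintype κ] [Field R] [LinearOrder R]
    [IsStrictOrderedRing R] (β : Matrix κ ι R) (u : ι → R) (w : κ → R) (a b : R) :
    1 / a ^ 2 * (u ⬝ᵥ ((βᵀ * β) *ᵥ u)) - 2 / (a * b) * (w ⬝ᵥ (β *ᵥ u)) +
        1 / b ^ 2 * (w ⬝ᵥ w) ≤ 0 ↔ a⁻¹ • (β *ᵥ u) = b⁻¹ • w := by
  rw [mmd_expr_eq_dotProduct_self, dotProduct_self_nonpos_iff, sub_eq_zero]

end

/-- When both kernels are Kronecker delta kernels vn distinct points (so the Gram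
matrices are identities) and all regularization thresholds are set to zero, the
feasible set of the kernelized formulation (6) coincides exactly with the feasible
set of the discrete optimal transport linear program:
`α ≥ 0`, `α𝟏 = (1/m)𝟏`, `αᵀ𝟏 = (1/n)𝟏` (the objective `tr(αCᵀ)` is identical). -/
theorem kronecker_delta_reduces_to_discrete_OT
    (m n : ℕ) (hm : 0 < m) (hn : 0 < n)
    (G₁ : Matrix (Fin m) (Fin m) ℝ) (G₂ : Matrix (Fin n) (Fin n) ℝ)
    (hG₁ : G₁ = 1) (hG₂ : G₂ = 1)
    (α : Matrix (Fin m) (Fin n) ℝ) :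
    (let vm : Fin m → ℝ := fun _ => 1
     let vn : Fin n → ℝ := fun _ => 1
     (∀ i j, 0 ≤ α i j) ∧ (∑ i, ∑ j, α i j) = 1 ∧
       ∃ (β : Matrix (Fin n) (Fin m) ℝ) (γ : Matrix (Fin m) (Fin n) ℝ),
         -- constraint with threshold Δ₁ = 0
         (1 / (m : ℝ) ^ 2) * ((G₁ *ᵥ vm) ⬝ᵥ ((βᵀ * G₂ * β) *ᵥ (G₁ *ᵥ vm))) -
             (2 / ((m : ℝ) * (n : ℝ))) * (vn ⬝ᵥ ((G₂ * β) *ᵥ (G₁ *ᵥ vm))) +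
             (1 / (n : ℝ) ^ 2) * (vn ⬝ᵥ (G₂ *ᵥ vn)) ≤ 0 ∧
         -- constraint with threshold Δ₂ = 0
         (1 / (n : ℝ) ^ 2) * ((G₂ *ᵥ vn) ⬝ᵥ ((γᵀ * G₁ * γ) *ᵥ (G₂ *ᵥ vn))) -
             (2 / ((m : ℝ) * (n : ℝ))) * (vm ⬝ᵥ ((G₁ * γ) *ᵥ (G₂ *ᵥ vn))) +
             (1 / (m : ℝ) ^ 2) * (vm ⬝ᵥ (G₁ *ᵥ vm)) ≤ 0 ∧
         -- coupling constraint with threshold ϑ₁ = 0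
         ((G₁ * α - (1 / (m : ℝ)) • (G₁ * G₁ * βᵀ))ᵀ *
             (α * G₂ - (1 / (m : ℝ)) • (G₁ * βᵀ * G₂))).trace ≤ 0 ∧
         -- coupling constraint with threshold ϑ₂ = 0
         ((α * G₂ - (1 / (n : ℝ)) • (γ * G₂ * G₂))ᵀ *
             (G₁ * α - (1 / (n : ℝ)) • (G₁ * γ * G₂))).trace ≤ 0 ∧
         -- marginal constraint with threshold ζ₁ = 0
         ((α *ᵥ vn - (1 / (m : ℝ)) • vm) ⬝ᵥ
             ((Matrix.hadamard G₁ G₁) *ᵥ (α *ᵥ vn - (1 / (m : ℝ)) • vm))) ≤ 0 ∧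
         -- marginal constraint with threshold ζ₂ = 0
         ((αᵀ *ᵥ vm - (1 / (n : ℝ)) • vn) ⬝ᵥ
             ((Matrix.hadamard G₂ G₂) *ᵥ (αᵀ *ᵥ vm - (1 / (n : ℝ)) • vn))) ≤ 0) ↔
      ((∀ i j, 0 ≤ α i j) ∧ (∀ i, ∑ j, α i j = 1 / (m : ℝ)) ∧
        (∀ j, ∑ i, α i j = 1 / (n : ℝ))) := by
  subst hG₁ hG₂
  have hm₀ : (m : ℝ) ≠ 0 := Nat.cast_ne_zero.mpr hm.ne'
  have hn₀ : (n : ℝ) ≠ 0 := Nat.cast_ne_zero.mpr hn.ne'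
  have : Nonempty (Fin m) := Fin.pos_iff_nonempty.mp hm
  simp only [hadamard_one, diag_one, diagonal_one', one_mulVec, Matrix.mul_one, Matrix.one_mul,
    dotProduct_self_nonpos_iff, sub_eq_zero, mulVec_const_one_eq_smul_iff]
  constructor
  · rintro ⟨hpos, -, -, -, -, -, -, -, hrow, hcol⟩
    exact ⟨hpos, hrow, hcol⟩
  · rintro ⟨hpos, hrow, hcol⟩
    refine ⟨hpos, ?_, (m : ℝ) • αᵀ, (n : ℝ) • α, ?_, ?_, ?_, ?_, hrow, hcol⟩
    · exact sum_sum_eq_one_of_sum_eq_one_div_card α (by simpa using hrow)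
    · rw [mmd_expr_nonpos_iff, smul_mulVec, inv_smul_smul₀ hm₀, ← one_div,
        mulVec_const_one_eq_smul_iff]
      exact hcol
    · rw [mul_comm (m : ℝ), mmd_expr_nonpos_iff, smul_mulVec, inv_smul_smul₀ hn₀, ← one_div,
        mulVec_const_one_eq_smul_iff]
      exact hrow
    · simp [hm₀]
    · simp [hn₀]
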